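/- arXiv:1707.00128 — 3 statements merged into one kernel-verified Lean document; each statement's English description precedes it below -/
import Mathlib

section
/- For a complete vector field X with flow Φ_a, the Lie derivative of codiffusors and diffusors satisfies the Leibniz rule with the duality pairing: 𝓛_X(⟨λ, L⟩) = ⟨𝓛_X(λ), L⟩ + ⟨λ, 𝓛_X(L)⟩ for every codiffusor λ and diffusor L. -/
/-- Partial derivative in the `i`-th coordinate direction on `ℝⁿ`. -/
noncomputable def pdi {n : ℕ} (i : Fin n) (f : (Fin n → ℝ) → ℝ) : (Fin n → ℝ) → ℝ :=
  fun x => fderiv ℝ f x (Pi.single i 1)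

/-- First-order components of the Lie derivative `𝓛_X λ` of a codiffusor
`λ = λᵢ d²xⁱ + λᵢⱼ dxⁱ·dxʲ` along `X = φᵏ∂ₖ`. -/
noncomputable def lieCod1 {n : ℕ} (X : (Fin n → ℝ) → Fin n → ℝ)
    (l1 : (Fin n → ℝ) → Fin n → ℝ) (i : Fin n) : (Fin n → ℝ) → ℝ :=
  fun x => (∑ k, X x k * pdi k (fun y => l1 y i) x)
    + ∑ k, l1 x k * pdi i (fun y => X y k) x

/-- Second-order components of the Lie derivative `𝓛_X λ` of a codiffusor along `X`. -/
noncomputable def lieCod2 {n : ℕ} (X : (Fin n → ℝ) → Fin n → ℝ)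
    (l1 : (Fin n → ℝ) → Fin n → ℝ) (l2 : (Fin n → ℝ) → Fin n → Fin n → ℝ)
    (i j : Fin n) : (Fin n → ℝ) → ℝ :=
  fun x => (∑ k, X x k * pdi k (fun y => l2 y i j) x)
    + (∑ k, l2 x i k * pdi j (fun y => X y k) x)
    + (∑ k, l2 x k j * pdi i (fun y => X y k) x)
    + ∑ k, l1 x k * pdi i (pdi j (fun y => X y k)) x

/-- Second-order coefficients of the Lie derivative `𝓛_X L` of a diffusor
`L = Aⁱʲ∂ᵢⱼ + bⁱ∂ᵢ` along `X = φᵏ∂ₖ`. -/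
noncomputable def lieDifA {n : ℕ} (X : (Fin n → ℝ) → Fin n → ℝ)
    (A : (Fin n → ℝ) → Fin n → Fin n → ℝ) (i j : Fin n) : (Fin n → ℝ) → ℝ :=
  fun x => (∑ k, X x k * pdi k (fun y => A y i j) x)
    - (∑ k, A x i k * pdi k (fun y => X y j) x)
    - ∑ k, A x k j * pdi k (fun y => X y i) x

/-- First-order coefficients of the Lie derivative `𝓛_X L` of a diffusor along `X`. -/
noncomputable def lieDifb {n : ℕ} (X : (Fin n → ℝ) → Fin n → ℝ)
    (A : (Fin n → ℝ) → Fin n → Fin n → ℝ) (b : (Fin n → ℝ) → Fin n → ℝ)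
    (i : Fin n) : (Fin n → ℝ) → ℝ :=
  fun x => (∑ k, X x k * pdi k (fun y => b y i) x)
    - (∑ k, b x k * pdi k (fun y => X y i) x)
    - ∑ j, ∑ k, A x j k * pdi j (pdi k (fun y => X y i)) x

/-- Duality pairing `⟨λ, L⟩ = λᵢ bⁱ + λᵢⱼ Aⁱʲ` between codiffusors and diffusors. -/
noncomputable def pairCD {n : ℕ} (l1 : (Fin n → ℝ) → Fin n → ℝ)
    (l2 : (Fin n → ℝ) → Fin n → Fin n → ℝ)
    (A : (Fin n → ℝ) → Fin n → Fin n → ℝ) (b : (Fin n → ℝ) → Fin n → ℝ) :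
    (Fin n → ℝ) → ℝ :=
  fun x => (∑ i, l1 x i * b x i) + ∑ i, ∑ j, l2 x i j * A x i j

lemma pdi_add {n : ℕ} (i : Fin n) {f g : (Fin n → ℝ) → ℝ} {x}
    (hf : DifferentiableAt ℝ f x) (hg : DifferentiableAt ℝ g x) :
    pdi i (fun y => f y + g y) x = pdi i f x + pdi i g x := by
  simp [pdi, fderiv_fun_add hf hg]

lemma pdi_mul {n : ℕ} (i : Fin n) {f g : (Fin n → ℝ) → ℝ} {x}
    (hf : DifferentiableAt ℝ f x) (hg : DifferentiableAt ℝ g x) :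
    pdi i (fun y => f y * g y) x = pdi i f x * g x + f x * pdi i g x := by
  simp [pdi, fderiv_fun_mul hf hg]; ring

lemma pdi_sum {n : ℕ} (k : Fin n) {ι : Type*} (s : Finset ι)
    (f : ι → (Fin n → ℝ) → ℝ) {x} (hf : ∀ i ∈ s, DifferentiableAt ℝ (f i) x) :
    pdi k (fun y => ∑ i ∈ s, f i y) x = ∑ i ∈ s, pdi k (f i) x := by
  simp [pdi, fderiv_fun_sum hf]


lemma sum_swap12 {n : ℕ} (f : Fin n → Fin n → ℝ) :
    ∑ i, ∑ j, f i j = ∑ j, ∑ i, f i j := Finset.sum_comm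

lemma sum_rot3 {n : ℕ} (f : Fin n → Fin n → Fin n → ℝ) :
    ∑ i, ∑ j, ∑ k, f i j k = ∑ j, ∑ k, ∑ i, f i j k := by
  rw [Finset.sum_comm]
  exact Finset.sum_congr rfl fun j _ => Finset.sum_comm

lemma sum_swap13 {n : ℕ} (f : Fin n → Fin n → Fin n → ℝ) :
    ∑ i, ∑ j, ∑ k, f i j k = ∑ k, ∑ j, ∑ i, f i j k := by
  rw [sum_rot3, sum_rot3]
  exact Finset.sum_congr rfl fun k _ => Finset.sum_comm

lemma key {n : ℕ} (Xv l1v bv : Fin n → ℝ) (l2v Av dX db dl1 : Fin n → Fin n → ℝ)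
    (dl2 dA ddX : Fin n → Fin n → Fin n → ℝ) :
    ∑ k, Xv k * ((∑ i, (dl1 k i * bv i + l1v i * db k i))
      + ∑ i, ∑ j, (dl2 k i j * Av i j + l2v i j * dA k i j))
    = ((∑ i, ((∑ k, Xv k * dl1 k i) + ∑ k, l1v k * dX i k) * bv i)
      + ∑ i, ∑ j, ((∑ k, Xv k * dl2 k i j) + (∑ k, l2v i k * dX j k)
          + (∑ k, l2v k j * dX i k) + ∑ k, l1v k * ddX i j k) * Av i j)
    + ((∑ i, l1v i * ((∑ k, Xv k * db k i) - (∑ k, bv k * dX k i)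
          - ∑ j, ∑ k, Av j k * ddX j k i))
      + ∑ i, ∑ j, l2v i j * ((∑ k, Xv k * dA k i j) - (∑ k, Av i k * dX k j)
          - ∑ k, Av k j * dX k i)) := by
  simp only [mul_add, add_mul, mul_sub, sub_mul, Finset.mul_sum, Finset.sum_mul,
    Finset.sum_add_distrib, Finset.sum_sub_distrib]
  have h1 : ∑ x : Fin n, ∑ i : Fin n, Xv i * dl1 i x * bv x
      = ∑ x : Fin n, ∑ i : Fin n, Xv x * (dl1 x i * bv i) := by
    rw [Finset.sum_comm]
    exact Finset.sum_congr rfl fun _ _ => Finset.sum_congr rfl fun _ _ => by ring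
  have h2 : ∑ x : Fin n, ∑ i : Fin n, l1v x * (Xv i * db i x)
      = ∑ x : Fin n, ∑ i : Fin n, Xv x * (l1v i * db x i) := by
    rw [Finset.sum_comm]
    exact Finset.sum_congr rfl fun _ _ => Finset.sum_congr rfl fun _ _ => by ring
  have h3 : ∑ x : Fin n, ∑ x_1 : Fin n, ∑ i : Fin n, Xv i * dl2 i x x_1 * Av x x_1
      = ∑ x : Fin n, ∑ x_1 : Fin n, ∑ i : Fin n, Xv x * (dl2 x x_1 i * Av x_1 i) := by
    rw [← sum_rot3 (fun a b c => Xv a * dl2 a b c * Av b c)]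
    exact Finset.sum_congr rfl fun _ _ => Finset.sum_congr rfl fun _ _ =>
      Finset.sum_congr rfl fun _ _ => by ring
  have h4 : ∑ x : Fin n, ∑ x_1 : Fin n, ∑ i : Fin n, l2v x x_1 * (Xv i * dA i x x_1)
      = ∑ x : Fin n, ∑ x_1 : Fin n, ∑ i : Fin n, Xv x * (l2v x_1 i * dA x x_1 i) := by
    rw [← sum_rot3 (fun a b c => l2v b c * (Xv a * dA a b c))]
    exact Finset.sum_congr rfl fun _ _ => Finset.sum_congr rfl fun _ _ =>
      Finset.sum_congr rfl fun _ _ => by ring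
  have h5 : ∑ x : Fin n, ∑ i : Fin n, l1v i * dX x i * bv x
      = ∑ x : Fin n, ∑ i : Fin n, l1v x * (bv i * dX i x) := by
    rw [Finset.sum_comm]
    exact Finset.sum_congr rfl fun _ _ => Finset.sum_congr rfl fun _ _ => by ring
  have h6 : ∑ x : Fin n, ∑ x_1 : Fin n, ∑ i : Fin n, l1v i * ddX x x_1 i * Av x x_1
      = ∑ x : Fin n, ∑ x_1 : Fin n, ∑ i : Fin n, l1v x * (Av x_1 i * ddX x_1 i x) := by
    rw [sum_rot3 (fun a b c => l1v c * ddX a b c * Av a b),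
        sum_rot3 (fun b c a => l1v c * ddX a b c * Av a b)]
    exact Finset.sum_congr rfl fun _ _ => Finset.sum_congr rfl fun _ _ =>
      Finset.sum_congr rfl fun _ _ => by ring
  have h7 : ∑ x : Fin n, ∑ x_1 : Fin n, ∑ i : Fin n, l2v x i * dX x_1 i * Av x x_1
      = ∑ x : Fin n, ∑ x_1 : Fin n, ∑ i : Fin n, l2v x x_1 * (Av x i * dX i x_1) := by
    refine Finset.sum_congr rfl fun x _ => ?_
    rw [Finset.sum_comm]
    exact Finset.sum_congr rfl fun _ _ => Finset.sum_congr rfl fun _ _ => by ring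
  have h8 : ∑ x : Fin n, ∑ x_1 : Fin n, ∑ i : Fin n, l2v i x_1 * dX x i * Av x x_1
      = ∑ x : Fin n, ∑ x_1 : Fin n, ∑ i : Fin n, l2v x x_1 * (Av i x_1 * dX i x) := by
    rw [sum_swap13 (fun a b c => l2v c b * dX a c * Av a b)]
    exact Finset.sum_congr rfl fun _ _ => Finset.sum_congr rfl fun _ _ =>
      Finset.sum_congr rfl fun _ _ => by ring
  linarith

/-- Leibniz rule for the Lie derivative with respect to the duality pairing:
`𝓛_X⟨λ, L⟩ = ⟨𝓛_X λ, L⟩ + ⟨λ, 𝓛_X L⟩` for every codiffusor `λ` and diffusor `L`. -/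
theorem lie_derivative_pairing_leibniz {n : ℕ}
    (X : (Fin n → ℝ) → Fin n → ℝ)
    (l1 : (Fin n → ℝ) → Fin n → ℝ) (l2 : (Fin n → ℝ) → Fin n → Fin n → ℝ)
    (A : (Fin n → ℝ) → Fin n → Fin n → ℝ) (b : (Fin n → ℝ) → Fin n → ℝ)
    (hX : ∀ i, ContDiff ℝ (⊤ : ℕ∞) (fun x => X x i))
    (hl1 : ∀ i, ContDiff ℝ (⊤ : ℕ∞) (fun x => l1 x i))
    (hl2 : ∀ i j, ContDiff ℝ (⊤ : ℕ∞) (fun x => l2 x i j))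
    (hA : ∀ i j, ContDiff ℝ (⊤ : ℕ∞) (fun x => A x i j))
    (hb : ∀ i, ContDiff ℝ (⊤ : ℕ∞) (fun x => b x i))
    (hAsym : ∀ x i j, A x i j = A x j i)
    (hl2sym : ∀ x i j, l2 x i j = l2 x j i) :
    ∀ x, (∑ k, X x k * pdi k (pairCD l1 l2 A b) x)
      = pairCD (fun y i => lieCod1 X l1 i y) (fun y i j => lieCod2 X l1 l2 i j y) A b x
        + pairCD l1 l2 (fun y i j => lieDifA X A i j y) (fun y i => lieDifb X A b i y) x := by
  intro x
  have diffX : ∀ i, DifferentiableAt ℝ (fun y => X y i) x :=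
    fun i => ((hX i).differentiable (by simp)).differentiableAt
  have diffl1 : ∀ i, DifferentiableAt ℝ (fun y => l1 y i) x :=
    fun i => ((hl1 i).differentiable (by simp)).differentiableAt
  have diffl2 : ∀ i j, DifferentiableAt ℝ (fun y => l2 y i j) x :=
    fun i j => ((hl2 i j).differentiable (by simp)).differentiableAt
  have diffA : ∀ i j, DifferentiableAt ℝ (fun y => A y i j) x :=
    fun i j => ((hA i j).differentiable (by simp)).differentiableAt
  have diffb : ∀ i, DifferentiableAt ℝ (fun y => b y i) x :=
    fun i => ((hb i).differentiable (by simp)).differentiableAt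
  have hp : ∀ k, pdi k (pairCD l1 l2 A b) x
      = (∑ i, (pdi k (fun y => l1 y i) x * b x i + l1 x i * pdi k (fun y => b y i) x))
        + ∑ i, ∑ j, (pdi k (fun y => l2 y i j) x * A x i j
            + l2 x i j * pdi k (fun y => A y i j) x) := by
    intro k
    have h1 : DifferentiableAt ℝ (fun y => ∑ i, l1 y i * b y i) x :=
      DifferentiableAt.fun_sum fun i _ => (diffl1 i).mul (diffb i)
    have h2 : DifferentiableAt ℝ (fun y => ∑ i, ∑ j, l2 y i j * A y i j) x :=
      DifferentiableAt.fun_sum fun i _ => DifferentiableAt.fun_sum fun j _ =>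
        (diffl2 i j).mul (diffA i j)
    rw [show pairCD l1 l2 A b = fun y => (∑ i, l1 y i * b y i)
          + ∑ i, ∑ j, l2 y i j * A y i j from rfl,
        pdi_add k h1 h2,
        pdi_sum k Finset.univ _ (fun i _ => (diffl1 i).fun_mul (diffb i)),
        pdi_sum k Finset.univ _ (fun i _ => DifferentiableAt.fun_sum fun j _ =>
          (diffl2 i j).fun_mul (diffA i j))]
    congr 1
    · exact Finset.sum_congr rfl fun i _ => pdi_mul k (diffl1 i) (diffb i)
    · refine Finset.sum_congr rfl fun i _ => ?_
      rw [pdi_sum k Finset.univ _ (fun j _ => (diffl2 i j).fun_mul (diffA i j))]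
      exact Finset.sum_congr rfl fun j _ => pdi_mul k (diffl2 i j) (diffA i j)
  simp only [hp, pairCD, lieCod1, lieCod2, lieDifA, lieDifb]
  exact key (X x) (l1 x) (b x) (l2 x) (A x)
    (fun i k => pdi i (fun y => X y k) x)
    (fun k i => pdi k (fun y => b y i) x)
    (fun k i => pdi k (fun y => l1 y i) x)
    (fun k i j => pdi k (fun y => l2 y i j) x)
    (fun k i j => pdi k (fun y => A y i j) x)
    (fun i j k => pdi i (pdi j (fun y => X y k)) x)
end

section
/- If Φ: M → M' is a diffeomorphism and X a complete vector field on M, then the Lie derivative of codiffusors is natural: 𝓛_{Φ_*X}(Φ_* λ) = Φ_*(𝓛_X(λ)) for every codiffusor λ, and similarly 𝓛_{Φ_*X}(Φ_* L) = Φ_*(𝓛_X(L)) for every diffusor L. -/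
/-- Components of the push-forward `Φ_*X` of a vector field along a diffeomorphism `Φ`
with inverse `Ψ`: `(Φ_*X)ʲ(y) = (∂ₖΦʲ Xᵏ)(Ψ(y))`. -/
noncomputable def pushVF {n : ℕ} (Φ Ψ : (Fin n → ℝ) → Fin n → ℝ)
    (X : (Fin n → ℝ) → Fin n → ℝ) : (Fin n → ℝ) → Fin n → ℝ :=
  fun y j => ∑ k, pdi k (fun x => Φ x j) (Ψ y) * X (Ψ y) k

/-- First-order components of the push-forward `Φ_*λ = (Φ⁻¹)* λ` of a codiffusor. -/
noncomputable def pushCod1 {n : ℕ} (Ψ : (Fin n → ℝ) → Fin n → ℝ)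
    (l1 : (Fin n → ℝ) → Fin n → ℝ) : (Fin n → ℝ) → Fin n → ℝ :=
  fun y i => ∑ p, l1 (Ψ y) p * pdi i (fun z => Ψ z p) y

/-- Second-order components of the push-forward `Φ_*λ = (Φ⁻¹)* λ` of a codiffusor. -/
noncomputable def pushCod2 {n : ℕ} (Ψ : (Fin n → ℝ) → Fin n → ℝ)
    (l1 : (Fin n → ℝ) → Fin n → ℝ) (l2 : (Fin n → ℝ) → Fin n → Fin n → ℝ) :
    (Fin n → ℝ) → Fin n → Fin n → ℝ :=
  fun y i j => (∑ p, ∑ q, l2 (Ψ y) p q * pdi i (fun z => Ψ z p) y * pdi j (fun z => Ψ z q) y)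
    + ∑ p, l1 (Ψ y) p * pdi i (pdi j (fun z => Ψ z p)) y

/-- The second order operator with coefficients `A, b`. -/
noncomputable def diffusorOp {n : ℕ} (A : (Fin n → ℝ) → Fin n → Fin n → ℝ)
    (b : (Fin n → ℝ) → Fin n → ℝ) (f : (Fin n → ℝ) → ℝ) : (Fin n → ℝ) → ℝ :=
  fun x => (∑ i, ∑ j, A x i j * pdi i (pdi j f) x) + ∑ i, b x i * pdi i f x

/-- Action `X(f) = Xᵏ ∂ₖ f` of a vector field given by its components. -/
noncomputable def vact {n : ℕ} (X : (Fin n → ℝ) → Fin n → ℝ)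
    (f : (Fin n → ℝ) → ℝ) : (Fin n → ℝ) → ℝ :=
  fun x => ∑ k, X x k * pdi k f x

namespace Tools
variable {n : ℕ}

lemma contDiff_pdi {f : (Fin n → ℝ) → ℝ} (hf : ContDiff ℝ (⊤ : ℕ∞) f) (i : Fin n) :
    ContDiff ℝ (⊤ : ℕ∞) (pdi i f) :=
  (hf.fderiv_right (m := (⊤ : ℕ∞)) (by simp)).clm_apply contDiff_const

lemma diff_pdi {f : (Fin n → ℝ) → ℝ} (hf : ContDiff ℝ (⊤ : ℕ∞) f) (i : Fin n) :
    Differentiable ℝ (pdi i f) := (contDiff_pdi hf i).differentiable (by simp)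

lemma pdi_add {f g : (Fin n → ℝ) → ℝ} {x} (hf : DifferentiableAt ℝ f x)
    (hg : DifferentiableAt ℝ g x) (i : Fin n) :
    pdi i (fun y => f y + g y) x = pdi i f x + pdi i g x := by
  simp [pdi, fderiv_fun_add hf hg]

lemma pdi_mul {f g : (Fin n → ℝ) → ℝ} {x} (hf : DifferentiableAt ℝ f x)
    (hg : DifferentiableAt ℝ g x) (i : Fin n) :
    pdi i (fun y => f y * g y) x = f x * pdi i g x + g x * pdi i f x := by
  simp [pdi, fderiv_fun_mul hf hg]

lemma pdi_const (c : ℝ) (i : Fin n) (x) : pdi i (fun _ : Fin n → ℝ => c) x = 0 := by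
  simp [pdi]

lemma pdi_sum {ι : Type*} {s : Finset ι} {f : ι → (Fin n → ℝ) → ℝ} {x}
    (hf : ∀ a ∈ s, DifferentiableAt ℝ (f a) x) (i : Fin n) :
    pdi i (fun y => ∑ a ∈ s, f a y) x = ∑ a ∈ s, pdi i (f a) x := by
  simp [pdi, fderiv_fun_sum hf]


lemma pdi_component {Φ : (Fin n → ℝ) → (Fin n → ℝ)} {x} (hΦ : DifferentiableAt ℝ Φ x)
    (i p : Fin n) :
    pdi i (fun y => Φ y p) x = fderiv ℝ Φ x (Pi.single i 1) p := by
  have h : (fun y => Φ y p)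
      = (ContinuousLinearMap.proj (R := ℝ) (φ := fun _ : Fin n => ℝ) p) ∘ Φ := rfl
  rw [pdi, h, fderiv_comp x (ContinuousLinearMap.differentiableAt _) hΦ,
    ContinuousLinearMap.fderiv]
  rfl

lemma pdi_coord (i p : Fin n) (x) :
    pdi i (fun z : Fin n → ℝ => z p) x = if p = i then 1 else 0 := by
  rw [pdi_component differentiableAt_fun_id i p]
  simp [Pi.single_apply]

lemma apply_eq_sum_pdi {f : (Fin n → ℝ) → ℝ} {z : Fin n → ℝ}
    (v : Fin n → ℝ) :
    fderiv ℝ f z v = ∑ p, v p * pdi p f z := by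
  conv_lhs => rw [← Finset.univ_sum_single v]
  rw [map_sum]
  refine Finset.sum_congr rfl fun p _ => ?_
  have : Pi.single p (v p) = (v p) • (Pi.single p (1 : ℝ) : Fin n → ℝ) := by
    rw [← Pi.single_smul]
    simp
  rw [this, map_smul]
  simp [pdi]

lemma pdi_comp {f : (Fin n → ℝ) → ℝ} {Φ : (Fin n → ℝ) → (Fin n → ℝ)} {x}
    (hf : DifferentiableAt ℝ f (Φ x)) (hΦ : DifferentiableAt ℝ Φ x) (i : Fin n) :
    pdi i (fun y => f (Φ y)) x = ∑ p, pdi p f (Φ x) * pdi i (fun y => Φ y p) x := by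
  have h : (fun y => f (Φ y)) = f ∘ Φ := rfl
  rw [pdi, h, fderiv_comp x hf hΦ, ContinuousLinearMap.comp_apply,
    apply_eq_sum_pdi]
  refine Finset.sum_congr rfl fun p _ => ?_
  rw [pdi_component hΦ i p, mul_comm]

lemma pdi_pdi {f : (Fin n → ℝ) → ℝ} (hf : ContDiff ℝ (⊤ : ℕ∞) f) (i j : Fin n) (x) :
    pdi i (pdi j f) x = fderiv ℝ (fderiv ℝ f) x (Pi.single i 1) (Pi.single j 1) := by
  have hdf : DifferentiableAt ℝ (fderiv ℝ f) x :=
    ((hf.fderiv_right (m := (⊤ : ℕ∞)) (by simp)).differentiable (by simp)) x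
  have h : pdi j f = fun y => (fderiv ℝ f y) (Pi.single j 1) := rfl
  rw [pdi, h, fderiv_clm_apply hdf (differentiableAt_const _)]
  simp

lemma pdi_comm {f : (Fin n → ℝ) → ℝ} (hf : ContDiff ℝ (⊤ : ℕ∞) f) (i j : Fin n) (x) :
    pdi i (pdi j f) x = pdi j (pdi i f) x := by
  rw [pdi_pdi hf, pdi_pdi hf]
  exact (hf.contDiffAt.isSymmSndFDerivAt (by rw [minSmoothness_of_isRCLikeNormedField]; exact WithTop.coe_le_coe.2 le_top)) _ _

lemma contDiff_vact {X : (Fin n → ℝ) → Fin n → ℝ} {f : (Fin n → ℝ) → ℝ}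
    (hX : ∀ k, ContDiff ℝ (⊤ : ℕ∞) fun x => X x k) (hf : ContDiff ℝ (⊤ : ℕ∞) f) :
    ContDiff ℝ (⊤ : ℕ∞) (vact X f) :=
  ContDiff.sum fun k _ => (hX k).mul (contDiff_pdi hf k)

lemma contDiff_pushVF {Φ Ψ X : (Fin n → ℝ) → Fin n → ℝ}
    (hΦ : ContDiff ℝ (⊤ : ℕ∞) Φ) (hΨ : ContDiff ℝ (⊤ : ℕ∞) Ψ)
    (hX : ∀ k, ContDiff ℝ (⊤ : ℕ∞) fun x => X x k) (j : Fin n) :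
    ContDiff ℝ (⊤ : ℕ∞) fun y => pushVF Φ Ψ X y j :=
  ContDiff.sum fun k _ =>
    ((contDiff_pdi (contDiff_pi.1 hΦ j) k).comp hΨ).mul ((hX k).comp hΨ)

lemma vact_pushVF {Φ Ψ X : (Fin n → ℝ) → Fin n → ℝ} {h : (Fin n → ℝ) → ℝ}
    (hΦ : ContDiff ℝ (⊤ : ℕ∞) Φ) (hinv₂ : Function.RightInverse Ψ Φ)
    (hh : Differentiable ℝ h) (y : Fin n → ℝ) :
    vact (pushVF Φ Ψ X) h y = vact X (fun x => h (Φ x)) (Ψ y) := by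
  unfold vact pushVF
  have key : ∀ k, pdi k (fun x => h (Φ x)) (Ψ y)
      = ∑ j, pdi j h y * pdi k (fun x => Φ x j) (Ψ y) := by
    intro k
    rw [pdi_comp (by rw [hinv₂ y]; exact hh _) (hΦ.differentiable (by simp) _) k]
    simp only [hinv₂ y]
  simp only [key, Finset.mul_sum, Finset.sum_mul]
  rw [Finset.sum_comm]
  exact Finset.sum_congr rfl fun j _ => Finset.sum_congr rfl fun k _ => by ring

lemma pdi_pdi_comp {f : (Fin n → ℝ) → ℝ} {Ψ : (Fin n → ℝ) → Fin n → ℝ}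
    (hf : ContDiff ℝ (⊤ : ℕ∞) f) (hΨ : ContDiff ℝ (⊤ : ℕ∞) Ψ) (i j : Fin n) (y : Fin n → ℝ) :
    pdi i (pdi j (fun z => f (Ψ z))) y
      = (∑ p, ∑ q, pdi p (pdi q f) (Ψ y) * pdi i (fun z => Ψ z p) y
            * pdi j (fun z => Ψ z q) y)
        + ∑ p, pdi p f (Ψ y) * pdi i (pdi j (fun z => Ψ z p)) y := by
  have hΨd := hΨ.differentiable (by simp)
  have hΨc : ∀ p, ContDiff ℝ (⊤ : ℕ∞) (fun z => Ψ z p) := fun p => contDiff_pi.1 hΨ p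
  have h1 : pdi j (fun z => f (Ψ z))
      = fun z => ∑ q, pdi q f (Ψ z) * pdi j (fun w => Ψ w q) z := by
    funext z; exact pdi_comp ((hf.differentiable (by simp)) _) (hΨd z) j
  rw [h1, pdi_sum (f := fun q z => pdi q f (Ψ z) * pdi j (fun w => Ψ w q) z)
      (fun q _ => DifferentiableAt.mul
      ((((contDiff_pdi hf q).comp hΨ).differentiable (by simp)) y)
      ((diff_pdi (hΨc q) j) y)) i]
  have h2 : ∀ q, pdi i (fun z => pdi q f (Ψ z) * pdi j (fun w => Ψ w q) z) y
      = pdi q f (Ψ y) * pdi i (pdi j (fun w => Ψ w q)) y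
        + pdi j (fun w => Ψ w q) y
            * ∑ p, pdi p (pdi q f) (Ψ y) * pdi i (fun z => Ψ z p) y := by
    intro q
    rw [pdi_mul (f := fun z => pdi q f (Ψ z)) (g := fun z => pdi j (fun w => Ψ w q) z)
        ((((contDiff_pdi hf q).comp hΨ).differentiable (by simp)) y)
        ((diff_pdi (hΨc q) j) y) i,
      pdi_comp (((contDiff_pdi hf q).differentiable (by simp)) _) (hΨd y) i]
  simp only [h2]
  rw [Finset.sum_add_distrib, add_comm, Finset.sum_comm]
  congr 1
  simp only [Finset.mul_sum]
  refine Finset.sum_congr rfl fun p _ => Finset.sum_congr rfl fun q _ => by ring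
lemma sum_comm3 {ι : Type*} [Fintype ι] (F : Fin n → Fin n → ι → ℝ) :
    ∑ p, ∑ q, ∑ a, F p q a = ∑ a, ∑ p, ∑ q, F p q a :=
  calc ∑ p, ∑ q, ∑ a, F p q a = ∑ p, ∑ a, ∑ q, F p q a :=
        Finset.sum_congr rfl fun p _ => Finset.sum_comm
  _ = ∑ a, ∑ p, ∑ q, F p q a := Finset.sum_comm

section SumLemmas

variable {ι : Type*} [Fintype ι] {Ψ X : (Fin n → ℝ) → Fin n → ℝ}
  {c g : ι → (Fin n → ℝ) → ℝ}

lemma pushCod1_sum (hg : ∀ a, ContDiff ℝ (⊤ : ℕ∞) (g a)) (hΨ : ContDiff ℝ (⊤ : ℕ∞) Ψ)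
    (y : Fin n → ℝ) (i : Fin n) :
    pushCod1 Ψ (fun x i => ∑ a, c a x * pdi i (g a) x) y i
      = ∑ a, c a (Ψ y) * pdi i (fun z => g a (Ψ z)) y := by
  have hch : ∀ a, pdi i (fun z => g a (Ψ z)) y
      = ∑ p, pdi p (g a) (Ψ y) * pdi i (fun z => Ψ z p) y :=
    fun a => pdi_comp (((hg a).differentiable (by simp)) _) ((hΨ.differentiable (by simp)) y) i
  simp only [pushCod1, hch, Finset.sum_mul, Finset.mul_sum]
  rw [Finset.sum_comm]
  exact Finset.sum_congr rfl fun a _ => Finset.sum_congr rfl fun p _ => by ring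

lemma pushCod2_sum (hg : ∀ a, ContDiff ℝ (⊤ : ℕ∞) (g a)) (hΨ : ContDiff ℝ (⊤ : ℕ∞) Ψ)
    (y : Fin n → ℝ) (i j : Fin n) :
    pushCod2 Ψ (fun x i => ∑ a, c a x * pdi i (g a) x)
      (fun x i j => ∑ a, c a x * pdi i (pdi j (g a)) x) y i j
      = ∑ a, c a (Ψ y) * pdi i (pdi j (fun z => g a (Ψ z))) y := by
  have hch : ∀ a, pdi i (pdi j (fun z => g a (Ψ z))) y
      = (∑ p, ∑ q, pdi p (pdi q (g a)) (Ψ y) * pdi i (fun z => Ψ z p) y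
            * pdi j (fun z => Ψ z q) y)
        + ∑ p, pdi p (g a) (Ψ y) * pdi i (pdi j (fun z => Ψ z p)) y :=
    fun a => pdi_pdi_comp (hg a) hΨ i j y
  simp only [pushCod2, hch, Finset.sum_mul, Finset.mul_sum, mul_add,
    Finset.sum_add_distrib]
  congr 1
  · rw [sum_comm3]
    all_goals exact Finset.sum_congr rfl fun a _ => Finset.sum_congr rfl fun p _ =>
      Finset.sum_congr rfl fun q _ => by ring
  · rw [Finset.sum_comm]
    all_goals exact Finset.sum_congr rfl fun a _ => Finset.sum_congr rfl fun p _ => by ring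

lemma lieCod1_sum (hX : ∀ k, ContDiff ℝ (⊤ : ℕ∞) fun x => X x k)
    (hc : ∀ a, ContDiff ℝ (⊤ : ℕ∞) (c a)) (hg : ∀ a, ContDiff ℝ (⊤ : ℕ∞) (g a))
    (i : Fin n) (x : Fin n → ℝ) :
    lieCod1 X (fun x i => ∑ a, c a x * pdi i (g a) x) i x
      = ∑ a, (vact X (c a) x * pdi i (g a) x
          + c a x * pdi i (vact X (g a)) x) := by
  have h1 : ∀ k, pdi k (fun y => ∑ a, c a y * pdi i (g a) y) x
      = ∑ a, (c a x * pdi k (pdi i (g a)) x + pdi i (g a) x * pdi k (c a) x) := by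
    intro k
    rw [pdi_sum (f := fun a y => c a y * pdi i (g a) y)
      (fun a _ => (((hc a).differentiable (by simp)) x).mul ((diff_pdi (hg a) i) x)) k]
    exact Finset.sum_congr rfl fun a _ =>
      pdi_mul (((hc a).differentiable (by simp)) x) ((diff_pdi (hg a) i) x) k
  have h2 : ∀ a, pdi i (vact X (g a)) x
      = ∑ k, (X x k * pdi i (pdi k (g a)) x
          + pdi k (g a) x * pdi i (fun y => X y k) x) := by
    intro a
    have hv : vact X (g a) = fun y => ∑ k, X y k * pdi k (g a) y := rfl
    rw [hv, pdi_sum (f := fun k y => X y k * pdi k (g a) y)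
      (fun k _ => (((hX k).differentiable (by simp)) x).mul ((diff_pdi (hg a) k) x)) i]
    exact Finset.sum_congr rfl fun k _ =>
      pdi_mul (((hX k).differentiable (by simp)) x) ((diff_pdi (hg a) k) x) i
  have hcm : ∀ (a : ι) (k : Fin n), pdi k (pdi i (g a)) x = pdi i (pdi k (g a)) x :=
    fun a k => pdi_comm (hg a) k i x
  simp only [h2, lieCod1, h1, hcm, vact]
  trans (∑ a, ∑ k, (X x k * (c a x * pdi i (pdi k (g a)) x
      + pdi i (g a) x * pdi k (c a) x)
      + c a x * pdi k (g a) x * pdi i (fun y => X y k) x))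
  · simp only [Finset.mul_sum, Finset.sum_mul, ← Finset.sum_add_distrib]
    rw [Finset.sum_comm]
    all_goals exact Finset.sum_congr rfl fun a _ => Finset.sum_congr rfl fun k _ => by ring
  · refine Finset.sum_congr rfl fun a _ => ?_
    simp only [Finset.mul_sum, Finset.sum_mul, ← Finset.sum_add_distrib]
    exact Finset.sum_congr rfl fun k _ => by ring

lemma lieCod2_sum (hX : ∀ k, ContDiff ℝ (⊤ : ℕ∞) fun x => X x k)
    (hc : ∀ a, ContDiff ℝ (⊤ : ℕ∞) (c a)) (hg : ∀ a, ContDiff ℝ (⊤ : ℕ∞) (g a))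
    (i j : Fin n) (x : Fin n → ℝ) :
    lieCod2 X (fun x i => ∑ a, c a x * pdi i (g a) x)
      (fun x i j => ∑ a, c a x * pdi i (pdi j (g a)) x) i j x
      = ∑ a, (vact X (c a) x * pdi i (pdi j (g a)) x
          + c a x * pdi i (pdi j (vact X (g a))) x) := by
  have h1 : ∀ k, pdi k (fun y => ∑ a, c a y * pdi i (pdi j (g a)) y) x
      = ∑ a, (c a x * pdi k (pdi i (pdi j (g a))) x
          + pdi i (pdi j (g a)) x * pdi k (c a) x) := by
    intro k
    rw [pdi_sum (f := fun a y => c a y * pdi i (pdi j (g a)) y)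
      (fun a _ => (((hc a).differentiable (by simp)) x).mul
        ((diff_pdi (contDiff_pdi (hg a) j) i) x)) k]
    exact Finset.sum_congr rfl fun a _ =>
      pdi_mul (((hc a).differentiable (by simp)) x)
        ((diff_pdi (contDiff_pdi (hg a) j) i) x) k
  have hcm3 : ∀ (a : ι) (k : Fin n),
      pdi k (pdi i (pdi j (g a))) x = pdi i (pdi j (pdi k (g a))) x := by
    intro a k
    rw [pdi_comm (contDiff_pdi (hg a) j) k i x]
    have hfn : pdi k (pdi j (g a)) = pdi j (pdi k (g a)) :=
      funext fun z => pdi_comm (hg a) k j z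
    rw [show pdi k (pdi j (g a)) = pdi j (pdi k (g a)) from hfn]
  have hcm2 : ∀ (a : ι) (k : Fin n),
      pdi k (pdi j (g a)) x = pdi j (pdi k (g a)) x :=
    fun a k => pdi_comm (hg a) k j x
  have h2 : ∀ a, pdi i (pdi j (vact X (g a))) x
      = ∑ k, (X x k * pdi i (pdi j (pdi k (g a))) x
          + pdi j (pdi k (g a)) x * pdi i (fun y => X y k) x
          + (pdi k (g a) x * pdi i (pdi j (fun y => X y k)) x
            + pdi j (fun y => X y k) x * pdi i (pdi k (g a)) x)) := by
    intro a
    have hs1 : pdi j (vact X (g a))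
        = fun z => ∑ k, (X z k * pdi j (pdi k (g a)) z
            + pdi k (g a) z * pdi j (fun y => X y k) z) := by
      funext z
      have hv : vact X (g a) = fun y => ∑ k, X y k * pdi k (g a) y := rfl
      rw [hv, pdi_sum (f := fun k y => X y k * pdi k (g a) y)
        (fun k _ => (((hX k).differentiable (by simp)) z).mul ((diff_pdi (hg a) k) z)) j]
      exact Finset.sum_congr rfl fun k _ =>
        pdi_mul (((hX k).differentiable (by simp)) z) ((diff_pdi (hg a) k) z) j
    rw [hs1, pdi_sum (f := fun k z => X z k * pdi j (pdi k (g a)) z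
        + pdi k (g a) z * pdi j (fun y => X y k) z)
      (fun k _ => DifferentiableAt.add
        ((((hX k).differentiable (by simp)) x).mul
          ((diff_pdi (contDiff_pdi (hg a) k) j) x))
        (((diff_pdi (hg a) k) x).mul ((diff_pdi (hX k) j) x))) i]
    refine Finset.sum_congr rfl fun k _ => ?_
    rw [pdi_add (f := fun z => X z k * pdi j (pdi k (g a)) z)
        (g := fun z => pdi k (g a) z * pdi j (fun y => X y k) z)
        ((((hX k).differentiable (by simp)) x).mul
          ((diff_pdi (contDiff_pdi (hg a) k) j) x))
        (((diff_pdi (hg a) k) x).mul ((diff_pdi (hX k) j) x)) i,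
      pdi_mul (f := fun z => X z k) (g := pdi j (pdi k (g a)))
        (((hX k).differentiable (by simp)) x)
        ((diff_pdi (contDiff_pdi (hg a) k) j) x) i,
      pdi_mul (f := pdi k (g a)) (g := pdi j (fun y => X y k))
        ((diff_pdi (hg a) k) x) ((diff_pdi (hX k) j) x) i]
    try ring
  simp only [h2, lieCod2, h1, hcm3, vact]
  trans (∑ a, ∑ k, (X x k * (c a x * pdi i (pdi j (pdi k (g a))) x
      + pdi i (pdi j (g a)) x * pdi k (c a) x)
      + c a x * pdi i (pdi k (g a)) x * pdi j (fun y => X y k) x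
      + c a x * pdi j (pdi k (g a)) x * pdi i (fun y => X y k) x
      + c a x * pdi k (g a) x * pdi i (pdi j (fun y => X y k)) x))
  · simp only [Finset.mul_sum, Finset.sum_mul, ← Finset.sum_add_distrib]
    rw [Finset.sum_comm]
    all_goals refine Finset.sum_congr rfl fun a _ => Finset.sum_congr rfl fun k _ => ?_
    all_goals rw [hcm2 a k]
    all_goals ring
  · refine Finset.sum_congr rfl fun a _ => ?_
    simp only [Finset.mul_sum, Finset.sum_mul, mul_add, ← Finset.sum_add_distrib]
    exact Finset.sum_congr rfl fun k _ => by ring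

end SumLemmas
lemma contDiff_coord (p : Fin n) : ContDiff ℝ (⊤ : ℕ∞) (fun z : Fin n → ℝ => z p) :=
  (ContinuousLinearMap.proj (R := ℝ) (φ := fun _ : Fin n => ℝ) p).contDiff

lemma diff_coord (p : Fin n) : Differentiable ℝ (fun z : Fin n → ℝ => z p) :=
  (contDiff_coord p).differentiable (by simp)

lemma contDiff_quad (p q : Fin n) : ContDiff ℝ (⊤ : ℕ∞) (fun z : Fin n → ℝ => z p * z q) :=
  (contDiff_coord p).mul (contDiff_coord q)

lemma pdi_quad (j p q : Fin n) (x : Fin n → ℝ) :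
    pdi j (fun z : Fin n → ℝ => z p * z q) x
      = x p * (if q = j then 1 else 0) + x q * (if p = j then 1 else 0) := by
  rw [pdi_mul (diff_coord p x) (diff_coord q x) j, pdi_coord, pdi_coord]

lemma pdi_quad_fn (j p q : Fin n) :
    pdi j (fun z : Fin n → ℝ => z p * z q)
      = fun x => x p * (if q = j then 1 else 0) + x q * (if p = j then 1 else 0) :=
  funext fun x => pdi_quad j p q x

lemma pdi_pdi_quad (i j p q : Fin n) (x : Fin n → ℝ) :
    pdi i (pdi j (fun z : Fin n → ℝ => z p * z q)) x
      = (if q = j then 1 else 0) * (if p = i then 1 else 0)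
        + (if p = j then 1 else 0) * (if q = i then 1 else 0) := by
  rw [pdi_quad_fn j p q,
    pdi_add (f := fun x : Fin n → ℝ => x p * (if q = j then 1 else 0))
      (g := fun x : Fin n → ℝ => x q * (if p = j then 1 else 0))
      ((diff_coord p x).mul (differentiableAt_const _))
      ((diff_coord q x).mul (differentiableAt_const _)) i,
    pdi_mul (diff_coord p x) (differentiableAt_const _) i,
    pdi_mul (diff_coord q x) (differentiableAt_const _) i,
    pdi_coord, pdi_coord, pdi_const, pdi_const]
  ring

lemma pdi_coord_fn (j p : Fin n) :
    pdi j (fun z : Fin n → ℝ => z p) = fun _ => if p = j then 1 else 0 :=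
  funext fun x => pdi_coord j p x

lemma pdi_pdi_coord (i j p : Fin n) (x : Fin n → ℝ) :
    pdi i (pdi j (fun z : Fin n → ℝ => z p)) x = 0 := by
  rw [pdi_coord_fn j p, pdi_const]

section Decomp

variable {l1 : (Fin n → ℝ) → Fin n → ℝ} {l2 : (Fin n → ℝ) → Fin n → Fin n → ℝ}

lemma decomp1 (hl2sym : ∀ x i j, l2 x i j = l2 x j i) :
    l1 = fun x i => ∑ a : (Fin n × Fin n) ⊕ Fin n,
      (Sum.elim (fun pq (x : Fin n → ℝ) => l2 x pq.1 pq.2 / 2)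
        (fun p x => l1 x p - ∑ q, l2 x p q * x q) a) x
      * pdi i (Sum.elim (fun pq (z : Fin n → ℝ) => z pq.1 * z pq.2)
          (fun p z => z p) a) x := by
  funext x i
  rw [Fintype.sum_sum_type]
  simp only [Sum.elim_inl, Sum.elim_inr]
  rw [Fintype.sum_prod_type]
  simp only [pdi_quad, pdi_coord]
  simp only [mul_add, mul_ite, ite_mul, mul_zero, zero_mul, mul_one, one_mul,
    Finset.sum_ite_eq', Finset.sum_ite_eq, Finset.mem_univ, if_true,
    Finset.sum_add_distrib]
  have hsym : ∀ p, l2 x p i = l2 x i p := fun p => hl2sym x p i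
  simp only [hsym]
  simp only [Finset.sum_ite_irrel, Finset.sum_const_zero, Finset.sum_ite_eq',
    Finset.mem_univ, if_true]
  have hhalf : (∑ q, l2 x i q / 2 * x q) + ∑ q, l2 x i q / 2 * x q
      = ∑ q : Fin n, l2 x i q * x q := by
    rw [← Finset.sum_add_distrib]
    exact Finset.sum_congr rfl fun q _ => by ring
  rw [hhalf]
  ring

lemma decomp2 (hl2sym : ∀ x i j, l2 x i j = l2 x j i) :
    l2 = fun x i j => ∑ a : (Fin n × Fin n) ⊕ Fin n,
      (Sum.elim (fun pq (x : Fin n → ℝ) => l2 x pq.1 pq.2 / 2)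
        (fun p x => l1 x p - ∑ q, l2 x p q * x q) a) x
      * pdi i (pdi j (Sum.elim (fun pq (z : Fin n → ℝ) => z pq.1 * z pq.2)
          (fun p z => z p) a)) x := by
  funext x i j
  rw [Fintype.sum_sum_type]
  simp only [Sum.elim_inl, Sum.elim_inr]
  rw [Fintype.sum_prod_type]
  simp only [pdi_pdi_quad, pdi_pdi_coord]
  simp only [mul_add, mul_ite, ite_mul, mul_zero, zero_mul, mul_one, one_mul,
    Finset.sum_ite_eq', Finset.sum_ite_eq, Finset.mem_univ, if_true,
    Finset.sum_add_distrib, Finset.sum_const_zero, add_zero]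
  simp only [Finset.sum_ite_irrel, Finset.sum_const_zero, Finset.sum_ite_eq',
    Finset.mem_univ, if_true]
  rw [hl2sym x j i]
  ring

end Decomp
lemma contDiff_diffusorOp {A : (Fin n → ℝ) → Fin n → Fin n → ℝ}
    {b : (Fin n → ℝ) → Fin n → ℝ} {f : (Fin n → ℝ) → ℝ}
    (hA : ∀ i j, ContDiff ℝ (⊤ : ℕ∞) (fun x => A x i j))
    (hb : ∀ i, ContDiff ℝ (⊤ : ℕ∞) (fun x => b x i)) (hf : ContDiff ℝ (⊤ : ℕ∞) f) :
    ContDiff ℝ (⊤ : ℕ∞) (diffusorOp A b f) :=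
  (ContDiff.sum fun i _ => ContDiff.sum fun j _ =>
      (hA i j).mul (contDiff_pdi (contDiff_pdi hf j) i)).add
    (ContDiff.sum fun i _ => (hb i).mul (contDiff_pdi hf i))

lemma main12 {ι : Type} [Fintype ι] {Φ Ψ X : (Fin n → ℝ) → Fin n → ℝ}
    (hΦ : ContDiff ℝ (⊤ : ℕ∞) Φ) (hΨ : ContDiff ℝ (⊤ : ℕ∞) Ψ)
    (hinv₁ : Function.LeftInverse Ψ Φ) (hinv₂ : Function.RightInverse Ψ Φ)
    (hX : ∀ k, ContDiff ℝ (⊤ : ℕ∞) fun x => X x k)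
    (c g : ι → (Fin n → ℝ) → ℝ)
    (hc : ∀ a, ContDiff ℝ (⊤ : ℕ∞) (c a)) (hg : ∀ a, ContDiff ℝ (⊤ : ℕ∞) (g a))
    (l1 : (Fin n → ℝ) → Fin n → ℝ) (l2 : (Fin n → ℝ) → Fin n → Fin n → ℝ)
    (hd1 : l1 = fun x i => ∑ a, c a x * pdi i (g a) x)
    (hd2 : l2 = fun x i j => ∑ a, c a x * pdi i (pdi j (g a)) x) :
    (∀ i y, lieCod1 (pushVF Φ Ψ X) (pushCod1 Ψ l1) i y
        = pushCod1 Ψ (fun x i => lieCod1 X l1 i x) y i) ∧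
    (∀ i j y, lieCod2 (pushVF Φ Ψ X) (pushCod1 Ψ l1) (pushCod2 Ψ l1 l2) i j y
        = pushCod2 Ψ (fun x i => lieCod1 X l1 i x)
            (fun x i j => lieCod2 X l1 l2 i j x) y i j) := by
  subst hd1 hd2
  have hX' : ∀ k, ContDiff ℝ (⊤ : ℕ∞) fun y => pushVF Φ Ψ X y k := contDiff_pushVF hΦ hΨ hX
  have hcΨ : ∀ a, ContDiff ℝ (⊤ : ℕ∞) fun w => c a (Ψ w) := fun a => (hc a).comp hΨ
  have hgΨ : ∀ a, ContDiff ℝ (⊤ : ℕ∞) fun z => g a (Ψ z) := fun a => (hg a).comp hΨ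
  have hvc : ∀ a, ContDiff ℝ (⊤ : ℕ∞) (vact X (c a)) := fun a => contDiff_vact hX (hc a)
  have hvg : ∀ a, ContDiff ℝ (⊤ : ℕ∞) (vact X (g a)) := fun a => contDiff_vact hX (hg a)
  have hD : ∀ b : ι ⊕ ι, ContDiff ℝ (⊤ : ℕ∞) (Sum.elim (fun a => vact X (c a)) c b) := by
    intro b; cases b
    · exact hvc _
    · exact hc _
  have hH : ∀ b : ι ⊕ ι, ContDiff ℝ (⊤ : ℕ∞) (Sum.elim g (fun a => vact X (g a)) b) := by
    intro b; cases b
    · exact hg _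
    · exact hvg _
  have hK1 : ∀ a y, vact (pushVF Φ Ψ X) (fun w => c a (Ψ w)) y = vact X (c a) (Ψ y) := by
    intro a y
    rw [vact_pushVF hΦ hinv₂ ((hcΨ a).differentiable (by simp)) y]
    congr 1
    funext x
    show c a (Ψ (Φ x)) = c a x
    rw [hinv₁ x]
  have hK2 : ∀ a, vact (pushVF Φ Ψ X) (fun z => g a (Ψ z))
      = fun z => vact X (g a) (Ψ z) := by
    intro a
    funext z
    rw [vact_pushVF hΦ hinv₂ ((hgΨ a).differentiable (by simp)) z]
    congr 1
    funext x
    show g a (Ψ (Φ x)) = g a x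
    rw [hinv₁ x]
  have hpushfn1 : pushCod1 Ψ (fun x i => ∑ a, c a x * pdi i (g a) x)
      = fun y i => ∑ a, c a (Ψ y) * pdi i (fun z => g a (Ψ z)) y := by
    funext y i; exact pushCod1_sum hg hΨ y i
  have hpushfn2 : pushCod2 Ψ (fun x i => ∑ a, c a x * pdi i (g a) x)
      (fun x i j => ∑ a, c a x * pdi i (pdi j (g a)) x)
      = fun y i j => ∑ a, c a (Ψ y) * pdi i (pdi j (fun z => g a (Ψ z))) y := by
    funext y i j; exact pushCod2_sum hg hΨ y i j
  have hliefn1 : (fun x i => lieCod1 X (fun x i => ∑ a, c a x * pdi i (g a) x) i x)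
      = fun x i => ∑ b : ι ⊕ ι, (Sum.elim (fun a => vact X (c a)) c b) x
          * pdi i (Sum.elim g (fun a => vact X (g a)) b) x := by
    funext x i
    rw [lieCod1_sum hX hc hg i x, Fintype.sum_sum_type]
    simp only [Sum.elim_inl, Sum.elim_inr]
    rw [Finset.sum_add_distrib]
  have hliefn2 : (fun x i j => lieCod2 X (fun x i => ∑ a, c a x * pdi i (g a) x)
        (fun x i j => ∑ a, c a x * pdi i (pdi j (g a)) x) i j x)
      = fun x i j => ∑ b : ι ⊕ ι, (Sum.elim (fun a => vact X (c a)) c b) x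
          * pdi i (pdi j (Sum.elim g (fun a => vact X (g a)) b)) x := by
    funext x i j
    rw [lieCod2_sum hX hc hg i j x, Fintype.sum_sum_type]
    simp only [Sum.elim_inl, Sum.elim_inr]
    rw [Finset.sum_add_distrib]
  constructor
  · intro i y
    calc lieCod1 (pushVF Φ Ψ X)
          (pushCod1 Ψ (fun x i => ∑ a, c a x * pdi i (g a) x)) i y
        = lieCod1 (pushVF Φ Ψ X)
            (fun w i' => ∑ a, c a (Ψ w) * pdi i' (fun z => g a (Ψ z)) w) i y := by
          rw [hpushfn1]
      _ = ∑ a, (vact (pushVF Φ Ψ X) (fun w => c a (Ψ w)) y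
            * pdi i (fun z => g a (Ψ z)) y
            + c a (Ψ y) * pdi i (vact (pushVF Φ Ψ X) (fun z => g a (Ψ z))) y) :=
          lieCod1_sum hX' hcΨ hgΨ i y
      _ = ∑ a, (vact X (c a) (Ψ y) * pdi i (fun z => g a (Ψ z)) y
            + c a (Ψ y) * pdi i (fun z => vact X (g a) (Ψ z)) y) := by
          refine Finset.sum_congr rfl fun a _ => ?_
          rw [hK1 a y, hK2 a]
      _ = ∑ b : ι ⊕ ι, (Sum.elim (fun a => vact X (c a)) c b) (Ψ y)
            * pdi i (fun z => (Sum.elim g (fun a => vact X (g a)) b) (Ψ z)) y := by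
          rw [Fintype.sum_sum_type]
          simp only [Sum.elim_inl, Sum.elim_inr]
          rw [Finset.sum_add_distrib]
      _ = pushCod1 Ψ (fun x i' => ∑ b : ι ⊕ ι,
            (Sum.elim (fun a => vact X (c a)) c b) x
            * pdi i' (Sum.elim g (fun a => vact X (g a)) b) x) y i :=
          (pushCod1_sum hH hΨ y i).symm
      _ = pushCod1 Ψ (fun x i' =>
            lieCod1 X (fun x i => ∑ a, c a x * pdi i (g a) x) i' x) y i := by
          rw [hliefn1]
  · intro i j y
    calc lieCod2 (pushVF Φ Ψ X)
          (pushCod1 Ψ (fun x i => ∑ a, c a x * pdi i (g a) x))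
          (pushCod2 Ψ (fun x i => ∑ a, c a x * pdi i (g a) x)
            (fun x i j => ∑ a, c a x * pdi i (pdi j (g a)) x)) i j y
        = lieCod2 (pushVF Φ Ψ X)
            (fun w i' => ∑ a, c a (Ψ w) * pdi i' (fun z => g a (Ψ z)) w)
            (fun w i' j' => ∑ a, c a (Ψ w) * pdi i' (pdi j' (fun z => g a (Ψ z))) w)
            i j y := by
          rw [hpushfn1, hpushfn2]
      _ = ∑ a, (vact (pushVF Φ Ψ X) (fun w => c a (Ψ w)) y
            * pdi i (pdi j (fun z => g a (Ψ z))) y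
            + c a (Ψ y) * pdi i (pdi j (vact (pushVF Φ Ψ X) (fun z => g a (Ψ z)))) y) :=
          lieCod2_sum hX' hcΨ hgΨ i j y
      _ = ∑ a, (vact X (c a) (Ψ y) * pdi i (pdi j (fun z => g a (Ψ z))) y
            + c a (Ψ y) * pdi i (pdi j (fun z => vact X (g a) (Ψ z))) y) := by
          refine Finset.sum_congr rfl fun a _ => ?_
          rw [hK1 a y, hK2 a]
      _ = ∑ b : ι ⊕ ι, (Sum.elim (fun a => vact X (c a)) c b) (Ψ y)
            * pdi i (pdi j (fun z => (Sum.elim g (fun a => vact X (g a)) b) (Ψ z))) y := by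
          rw [Fintype.sum_sum_type]
          simp only [Sum.elim_inl, Sum.elim_inr]
          rw [Finset.sum_add_distrib]
      _ = pushCod2 Ψ (fun x i' => ∑ b : ι ⊕ ι,
            (Sum.elim (fun a => vact X (c a)) c b) x
            * pdi i' (Sum.elim g (fun a => vact X (g a)) b) x)
          (fun x i' j' => ∑ b : ι ⊕ ι,
            (Sum.elim (fun a => vact X (c a)) c b) x
            * pdi i' (pdi j' (Sum.elim g (fun a => vact X (g a)) b)) x) y i j :=
          (pushCod2_sum hH hΨ y i j).symm
      _ = pushCod2 Ψ (fun x i' =>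
            lieCod1 X (fun x i => ∑ a, c a x * pdi i (g a) x) i' x)
          (fun x i' j' =>
            lieCod2 X (fun x i => ∑ a, c a x * pdi i (g a) x)
              (fun x i j => ∑ a, c a x * pdi i (pdi j (g a)) x) i' j' x) y i j := by
          rw [hliefn1, hliefn2]
end Tools


/-- Naturality of the Lie derivative under a diffeomorphism `Φ` (with inverse `Ψ`):
`𝓛_{Φ_*X}(Φ_*λ) = Φ_*(𝓛_X λ)` for every codiffusor `λ` (componentwise), and
`𝓛_{Φ_*X}(Φ_*L) = Φ_*(𝓛_X L)` for every diffusor `L`, the latter stated at the level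
of operators, where `Φ_*L : g ↦ L(g∘Φ)∘Ψ` and the Lie derivative of a diffusor acts
as the commutator `f ↦ X(L(f)) − L(X(f))`. -/
theorem lie_derivative_naturality {n : ℕ}
    (Φ Ψ : (Fin n → ℝ) → Fin n → ℝ)
    (hΦ : ContDiff ℝ (⊤ : ℕ∞) Φ) (hΨ : ContDiff ℝ (⊤ : ℕ∞) Ψ)
    (hinv₁ : Function.LeftInverse Ψ Φ) (hinv₂ : Function.RightInverse Ψ Φ)
    (X : (Fin n → ℝ) → Fin n → ℝ) (hX : ∀ i, ContDiff ℝ (⊤ : ℕ∞) (fun x => X x i))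
    (l1 : (Fin n → ℝ) → Fin n → ℝ) (l2 : (Fin n → ℝ) → Fin n → Fin n → ℝ)
    (hl1 : ∀ i, ContDiff ℝ (⊤ : ℕ∞) (fun x => l1 x i))
    (hl2 : ∀ i j, ContDiff ℝ (⊤ : ℕ∞) (fun x => l2 x i j))
    (hl2sym : ∀ x i j, l2 x i j = l2 x j i)
    (A : (Fin n → ℝ) → Fin n → Fin n → ℝ) (b : (Fin n → ℝ) → Fin n → ℝ)
    (hA : ∀ i j, ContDiff ℝ (⊤ : ℕ∞) (fun x => A x i j))
    (hb : ∀ i, ContDiff ℝ (⊤ : ℕ∞) (fun x => b x i))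
    (hAsym : ∀ x i j, A x i j = A x j i) :
    ((∀ i y, lieCod1 (pushVF Φ Ψ X) (pushCod1 Ψ l1) i y
        = pushCod1 Ψ (fun x i => lieCod1 X l1 i x) y i) ∧
     (∀ i j y, lieCod2 (pushVF Φ Ψ X) (pushCod1 Ψ l1) (pushCod2 Ψ l1 l2) i j y
        = pushCod2 Ψ (fun x i => lieCod1 X l1 i x)
            (fun x i j => lieCod2 X l1 l2 i j x) y i j)) ∧
    (∀ (g : (Fin n → ℝ) → ℝ), ContDiff ℝ (⊤ : ℕ∞) g → ∀ y,
      vact (pushVF Φ Ψ X) (fun z => diffusorOp A b (g ∘ Φ) (Ψ z)) y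
          - diffusorOp A b ((vact (pushVF Φ Ψ X) g) ∘ Φ) (Ψ y)
        = (vact X (diffusorOp A b (g ∘ Φ)) (Ψ y)
            - diffusorOp A b (vact X (g ∘ Φ)) (Ψ y))) := by

  constructor
  · exact Tools.main12 hΦ hΨ hinv₁ hinv₂ hX
      (Sum.elim (fun (pq : Fin n × Fin n) (x : Fin n → ℝ) => l2 x pq.1 pq.2 / 2)
        (fun (p : Fin n) x => l1 x p - ∑ q, l2 x p q * x q))
      (Sum.elim (fun (pq : Fin n × Fin n) (z : Fin n → ℝ) => z pq.1 * z pq.2) (fun (p : Fin n) z => z p))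
      (by
        rintro (⟨p, q⟩ | p)
        · exact (hl2 p q).div_const 2
        · exact (hl1 p).sub
            (ContDiff.sum fun q _ => (hl2 p q).mul (Tools.contDiff_coord q)))
      (by
        rintro (⟨p, q⟩ | p)
        · exact Tools.contDiff_quad p q
        · exact Tools.contDiff_coord p)
      l1 l2 (Tools.decomp1 hl2sym) (Tools.decomp2 hl2sym)
  · intro g hg y
    have hgΦ : ContDiff ℝ (⊤ : ℕ∞) (g ∘ Φ) := hg.comp hΦ
    have hop : ContDiff ℝ (⊤ : ℕ∞) (diffusorOp A b (g ∘ Φ)) :=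
      Tools.contDiff_diffusorOp hA hb hgΦ
    have h1 : vact (pushVF Φ Ψ X) (fun z => diffusorOp A b (g ∘ Φ) (Ψ z)) y
        = vact X (diffusorOp A b (g ∘ Φ)) (Ψ y) := by
      rw [Tools.vact_pushVF (X := X) hΦ hinv₂ (show Differentiable ℝ fun z => diffusorOp A b (g ∘ Φ) (Ψ z) from (hop.comp hΨ).differentiable (by simp)) y]
      congr 1
      funext x
      show diffusorOp A b (g ∘ Φ) (Ψ (Φ x)) = diffusorOp A b (g ∘ Φ) x
      rw [hinv₁ x]
    have h2 : (vact (pushVF Φ Ψ X) g) ∘ Φ = vact X (g ∘ Φ) := by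
      funext x
      show vact (pushVF Φ Ψ X) g (Φ x) = vact X (g ∘ Φ) x
      rw [Tools.vact_pushVF hΦ hinv₂ (hg.differentiable (by simp)) (Φ x), hinv₁ x]
      rfl
    rw [h1, h2]
end

section
/- Let μ: ℝⁿ → ℝⁿ and σ: ℝⁿ → Mat(n,m) be smooth, and set b^i = μ^i, A^{ij} = (1/2) Σ_α σ^i_α σ^j_α. If a vector field φ^i ∂_{x^i}, a smooth map C: ℝⁿ → so(m) (antisymmetric matrices), and a ∈ ℝ satisfy the SDE determining equation φ^k ∂_{x^k}σ^i_α − σ^k_α ∂_{x^k}φ^i + C^β_α σ^i_β + (1/2)a σ^i_α = 0, then the martingale-problem determining equation φ^k ∂_{x^k}A^{ij} − A^{ik}∂_{x^k}φ^j − A^{kj}∂_{x^k}φ^i + a A^{ij} = 0 holds. -/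
/-- Product rule for the partial derivative of `(1/2) Σ_α σⁱ_α σʲ_α`. -/
lemma pdi_half {n m : ℕ} (σ : (Fin n → ℝ) → Fin n → Fin m → ℝ)
    (hσ : ∀ i α, ContDiff ℝ (⊤ : ℕ∞) (fun x => σ x i α)) (i j k : Fin n) (x : Fin n → ℝ) :
    pdi k (fun y => (1 / 2 : ℝ) * ∑ α, σ y i α * σ y j α) x
      = (1 / 2) * ∑ α, (pdi k (fun y => σ y i α) x * σ x j α
          + σ x i α * pdi k (fun y => σ y j α) x) := by
  have hd : ∀ p α, DifferentiableAt ℝ (fun y => σ y p α) x :=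
    fun p α => ((hσ p α).differentiable (by simp)).differentiableAt
  unfold pdi
  rw [fderiv_const_mul (DifferentiableAt.fun_sum fun α _ => (hd i α).fun_mul (hd j α))]
  rw [fderiv_fun_sum fun α _ => (hd i α).fun_mul (hd j α)]
  simp only [ContinuousLinearMap.smul_apply, ContinuousLinearMap.sum_apply, smul_eq_mul]
  congr 1
  refine Finset.sum_congr rfl fun α _ => ?_
  rw [fderiv_fun_mul (hd i α) (hd j α)]
  simp only [ContinuousLinearMap.add_apply, ContinuousLinearMap.smul_apply, smul_eq_mul]
  ring

lemma sum_factor {ι : Type*} [Fintype ι] (c : ℝ) (f g : ι → ℝ)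
    (h : ∀ k, f k = c * g k) : ∑ k, f k = c * ∑ k, g k := by
  rw [Finset.mul_sum]; exact Finset.sum_congr rfl fun k _ => h k

/-- Given `σ : ℝⁿ → Mat(n,m)` and `A = (1/2)Σ_α σⁱ_α σʲ_α`, if `(φ, C, a)` (with `C`
antisymmetric-matrix valued) satisfies the SDE determining equation
`φᵏ∂ₖσⁱ_α − σᵏ_α∂ₖφⁱ + C^β_α σⁱ_β + (1/2)a σⁱ_α = 0`, then the martingale-problem
determining equation `φᵏ∂ₖAⁱʲ − Aⁱᵏ∂ₖφʲ − Aᵏʲ∂ₖφⁱ + aAⁱʲ = 0` holds. -/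
theorem sde_determining_implies_martingale_determining {n m : ℕ}
    (σ : (Fin n → ℝ) → Fin n → Fin m → ℝ)
    (φ : (Fin n → ℝ) → Fin n → ℝ)
    (C : (Fin n → ℝ) → Fin m → Fin m → ℝ)
    (a : ℝ)
    (hσ : ∀ i α, ContDiff ℝ (⊤ : ℕ∞) (fun x => σ x i α))
    (hφ : ∀ i, ContDiff ℝ (⊤ : ℕ∞) (fun x => φ x i))
    (hC : ∀ α β, ContDiff ℝ (⊤ : ℕ∞) (fun x => C x α β))
    (hCanti : ∀ x α β, C x α β = -C x β α)
    (hdet : ∀ x (i : Fin n) (α : Fin m),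
      (∑ k, φ x k * pdi k (fun y => σ y i α) x)
        - (∑ k, σ x k α * pdi k (fun y => φ y i) x)
        + (∑ β, C x β α * σ x i β)
        + (1 / 2) * a * σ x i α = 0) :
    ∀ x (i j : Fin n),
      (∑ k, φ x k * pdi k (fun y => (1 / 2) * ∑ α, σ y i α * σ y j α) x)
        - (∑ k, ((1 / 2) * ∑ α, σ x i α * σ x k α) * pdi k (fun y => φ y j) x)
        - (∑ k, ((1 / 2) * ∑ α, σ x k α * σ x j α) * pdi k (fun y => φ y i) x)
        + a * ((1 / 2) * ∑ α, σ x i α * σ x j α) = 0 := by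
  intro x i j
  have hE : ∀ (p : Fin n) (α : Fin m),
      (∑ k, φ x k * pdi k (fun y => σ y p α) x)
        - (∑ k, σ x k α * pdi k (fun y => φ y p) x)
      = -(∑ β, C x β α * σ x p β) - (1 / 2) * a * σ x p α := by
    intro p α
    have h := hdet x p α
    linarith
  -- Step 1: rewrite everything as a sum over α of sums over k.
  have e1 : (∑ k, φ x k * pdi k (fun y => (1 / 2) * ∑ α, σ y i α * σ y j α) x)
      = ∑ α, ∑ k, (1 / 2) * (φ x k * (pdi k (fun y => σ y i α) x * σ x j α
          + σ x i α * pdi k (fun y => σ y j α) x)) := by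
    rw [Finset.sum_comm]
    refine Finset.sum_congr rfl fun k _ => ?_
    rw [pdi_half σ hσ i j k x, Finset.mul_sum, Finset.mul_sum]
    exact Finset.sum_congr rfl fun α _ => by ring
  have e2 : (∑ k, ((1 / 2) * ∑ α, σ x i α * σ x k α) * pdi k (fun y => φ y j) x)
      = ∑ α, ∑ k, (1 / 2) * (σ x i α * (σ x k α * pdi k (fun y => φ y j) x)) := by
    rw [Finset.sum_comm]
    refine Finset.sum_congr rfl fun k _ => ?_
    rw [Finset.mul_sum, Finset.sum_mul]
    exact Finset.sum_congr rfl fun α _ => by ring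
  have e3 : (∑ k, ((1 / 2) * ∑ α, σ x k α * σ x j α) * pdi k (fun y => φ y i) x)
      = ∑ α, ∑ k, (1 / 2) * (σ x j α * (σ x k α * pdi k (fun y => φ y i) x)) := by
    rw [Finset.sum_comm]
    refine Finset.sum_congr rfl fun k _ => ?_
    rw [Finset.mul_sum, Finset.sum_mul]
    exact Finset.sum_congr rfl fun α _ => by ring
  have e4 : a * ((1 / 2) * ∑ α, σ x i α * σ x j α)
      = ∑ α, (1 / 2) * (a * (σ x i α * σ x j α)) := by
    rw [Finset.mul_sum, Finset.mul_sum]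
    exact Finset.sum_congr rfl fun α _ => by ring
  rw [e1, e2, e3, e4, ← Finset.sum_sub_distrib, ← Finset.sum_sub_distrib,
    ← Finset.sum_add_distrib]
  -- Step 2: per-α reduction using the SDE determining equation.
  have e5 : ∀ α : Fin m,
      ((∑ k, (1 / 2) * (φ x k * (pdi k (fun y => σ y i α) x * σ x j α
            + σ x i α * pdi k (fun y => σ y j α) x))
        - ∑ k, (1 / 2) * (σ x i α * (σ x k α * pdi k (fun y => φ y j) x)))
        - ∑ k, (1 / 2) * (σ x j α * (σ x k α * pdi k (fun y => φ y i) x)))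
        + (1 / 2) * (a * (σ x i α * σ x j α))
      = -(1 / 2) * ∑ β, C x β α * (σ x i β * σ x j α + σ x j β * σ x i α) := by
    intro α
    have s1 : ∑ k, (1 / 2) * (φ x k * (pdi k (fun y => σ y i α) x * σ x j α
          + σ x i α * pdi k (fun y => σ y j α) x))
        = (1 / 2) * σ x j α * (∑ k, φ x k * pdi k (fun y => σ y i α) x)
          + (1 / 2) * σ x i α * (∑ k, φ x k * pdi k (fun y => σ y j α) x) := by
      rw [Finset.mul_sum, Finset.mul_sum, ← Finset.sum_add_distrib]
      exact Finset.sum_congr rfl fun k _ => by ring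
    have s2 : ∑ k, (1 / 2) * (σ x i α * (σ x k α * pdi k (fun y => φ y j) x))
        = (1 / 2) * σ x i α * (∑ k, σ x k α * pdi k (fun y => φ y j) x) :=
      sum_factor _ _ _ fun k => by ring
    have s3 : ∑ k, (1 / 2) * (σ x j α * (σ x k α * pdi k (fun y => φ y i) x))
        = (1 / 2) * σ x j α * (∑ k, σ x k α * pdi k (fun y => φ y i) x) :=
      sum_factor _ _ _ fun k => by ring
    have s4 : ∑ β, C x β α * (σ x i β * σ x j α + σ x j β * σ x i α)
        = σ x j α * (∑ β, C x β α * σ x i β) + σ x i α * (∑ β, C x β α * σ x j β) := by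
      rw [Finset.mul_sum, Finset.mul_sum, ← Finset.sum_add_distrib]
      exact Finset.sum_congr rfl fun β _ => by ring
    rw [s1, s2, s3, s4]
    have hEi := hE i α
    have hEj := hE j α
    linear_combination (1 / 2) * σ x j α * hEi + (1 / 2) * σ x i α * hEj
  rw [Finset.sum_congr rfl fun α _ => e5 α]
  -- Step 3: the remaining double sum vanishes by antisymmetry of `C`.
  rw [← Finset.mul_sum]
  have hT : ∑ α, ∑ β, C x β α * (σ x i β * σ x j α + σ x j β * σ x i α) = 0 := by
    have h : (∑ α, ∑ β, C x β α * (σ x i β * σ x j α + σ x j β * σ x i α))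
        = -(∑ α, ∑ β, C x β α * (σ x i β * σ x j α + σ x j β * σ x i α)) := by
      conv_lhs => rw [Finset.sum_comm]
      rw [← Finset.sum_neg_distrib]
      refine Finset.sum_congr rfl fun α _ => ?_
      rw [← Finset.sum_neg_distrib]
      refine Finset.sum_congr rfl fun β _ => ?_
      rw [hCanti x α β]
      ring
    linarith
  rw [hT, mul_zero]
end
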